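/- arXiv:2103.07146 — 2 statements merged into one kernel-verified Lean document; each statement's English description precedes it below -/
import Mathlib

section
/- For every scalar x, the rank of S − x L satisfies rank(S − x L) ≤ 2(p + q) · rank(C), where C is the Cauchy matrix with entries 1/(μ_h − λ_k), L is the Loewner matrix and S is the shifted Loewner matrix built from the same data. -/
/-!
The pencil factors as `S - x L = C ⊙ ((M - x)V R - L_mat W (Λ - x))`, the sum of two Hadamard
products `C ⊙ (A B)` with inner dimensions `q` and `p`. Hadamard multiplication by a rank-one
matrix `a bᵀ` is `diag(a) C diag(b)`, so `C ⊙ (A B) = ∑ⱼ diag(A_{·j}) C diag(B_{j·})` has rank at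
most (inner dimension) · `rank C`.
-/

open Matrix

namespace Matrix

theorem hadamard_sub {m n α : Type*} [NonUnitalNonAssocRing α] (A B C : Matrix m n α) :
    A ⊙ (B - C) = A ⊙ B - A ⊙ C :=
  ext fun _ _ => mul_sub _ _ _

theorem hadamard_mul_eq_sum_diagonal_mul_diagonal {m n k α : Type*} [Fintype m] [Fintype n]
    [Fintype k] [DecidableEq m] [DecidableEq n] [CommSemiring α]
    (C : Matrix m n α) (A : Matrix m k α) (B : Matrix k n α) :
    C ⊙ (A * B) = ∑ j, diagonal (fun i => A i j) * C * diagonal (fun i => B j i) := by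
  ext i i'
  simp [sum_apply, mul_apply, diagonal, Finset.mul_sum, mul_left_comm, mul_comm]

section Field

variable {m n K : Type*} [Fintype n] [Field K]

theorem rank_add_le (A B : Matrix m n K) : (A + B).rank ≤ A.rank + B.rank := by
  rw [rank, rank, rank, mulVecLin_add]
  refine (Submodule.finrank_mono ?_).trans (Submodule.finrank_add_le_finrank_add_finrank _ _)
  rintro _ ⟨v, rfl⟩
  exact Submodule.add_mem_sup ⟨v, rfl⟩ ⟨v, rfl⟩

theorem rank_sum_le {ι : Type*} (s : Finset ι) (f : ι → Matrix m n K) :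
    (∑ i ∈ s, f i).rank ≤ ∑ i ∈ s, (f i).rank :=
  Finset.sum_hom_rel (r := fun A b => rank A ≤ b) rank_zero.le fun _ _ _ h =>
    (rank_add_le _ _).trans (by gcongr)

theorem rank_hadamard_mul_le {k : Type*} [Fintype m] [Fintype k] [DecidableEq m] [DecidableEq n]
    (C : Matrix m n K) (A : Matrix m k K) (B : Matrix k n K) :
    (C ⊙ (A * B)).rank ≤ Fintype.card k * C.rank := by
  rw [hadamard_mul_eq_sum_diagonal_mul_diagonal]
  calc _ ≤ ∑ j, (diagonal (fun i => A i j) * C * diagonal (fun i => B j i)).rank :=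
        rank_sum_le _ _
    _ ≤ ∑ _j : k, C.rank :=
        Finset.sum_le_sum fun _ _ => (rank_mul_le_left _ _).trans (rank_mul_le_right _ _)
    _ = Fintype.card k * C.rank := by simp

end Field

end Matrix

theorem diagonal_mul_sub_mul_diagonal_sub_smul {n p q α : Type*} [Fintype n] [Fintype p]
    [Fintype q] [DecidableEq n] [CommRing α] (μ lam : n → α)
    (V : Matrix n q α) (R : Matrix q n α) (Lmat : Matrix n p α) (W : Matrix p n α) (x : α) :
    diagonal μ * (V * R) - Lmat * W * diagonal lam - x • (V * R - Lmat * W)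
      = (diagonal μ - x • 1) * V * R + -Lmat * (W * (diagonal lam - x • 1)) := by
  simp only [Matrix.sub_mul, Matrix.mul_sub, Matrix.neg_mul, Matrix.smul_mul, Matrix.mul_smul,
    Matrix.one_mul, Matrix.mul_one, Matrix.mul_assoc, smul_sub]
  module

theorem shifted_loewner_pencil_rank_bound_general {N p q : ℕ} (μ lam : Fin N → ℂ)
    (V : Matrix (Fin N) (Fin q) ℂ) (R : Matrix (Fin q) (Fin N) ℂ)
    (Lmat : Matrix (Fin N) (Fin p) ℂ) (W : Matrix (Fin p) (Fin N) ℂ)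
    (L S C : Matrix (Fin N) (Fin N) ℂ)
    (hL : L = Matrix.hadamard C (V * R - Lmat * W))
    (hS : S = Matrix.hadamard C
      (Matrix.diagonal μ * (V * R) - Lmat * W * Matrix.diagonal lam))
    (x : ℂ) :
    (S - x • L).rank ≤ 2 * (p + q) * C.rank := by
  have hpencil : S - x • L = C ⊙ ((diagonal μ - x • 1) * V * R)
      + C ⊙ (-Lmat * (W * (diagonal lam - x • 1))) := by
    rw [hS, hL, ← hadamard_smul, ← hadamard_sub, diagonal_mul_sub_mul_diagonal_sub_smul,
      hadamard_add]
  calc (S - x • L).rank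
      ≤ (C ⊙ ((diagonal μ - x • 1) * V * R)).rank
        + (C ⊙ (-Lmat * (W * (diagonal lam - x • 1)))).rank := hpencil ▸ rank_add_le _ _
    _ ≤ q * C.rank + p * C.rank := by
        gcongr
        · simpa using rank_hadamard_mul_le C ((diagonal μ - x • 1) * V) R
        · simpa using rank_hadamard_mul_le C (-Lmat) (W * (diagonal lam - x • 1))
    _ ≤ 2 * (p + q) * C.rank := by nlinarith

/-- Rank bound: `rank(S − x L) ≤ 2 (p + q) · rank(C)` for every scalar `x`. -/
theorem shifted_loewner_pencil_rank_bound {N p q : ℕ} (μ lam : Fin N → ℂ)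
    (hsep : ∀ h k, μ h ≠ lam k)
    (V : Matrix (Fin N) (Fin q) ℂ) (R : Matrix (Fin q) (Fin N) ℂ)
    (Lmat : Matrix (Fin N) (Fin p) ℂ) (W : Matrix (Fin p) (Fin N) ℂ)
    (L S C : Matrix (Fin N) (Fin N) ℂ)
    (hL : L = Matrix.hadamard C (V * R - Lmat * W))
    (hS : S = Matrix.hadamard C
      (Matrix.diagonal μ * (V * R) - Lmat * W * Matrix.diagonal lam))
    (hC : ∀ h k, C h k = 1 / (μ h - lam k))
    (x : ℂ) :
    (S - x • L).rank ≤ 2 * (p + q) * C.rank :=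
  shifted_loewner_pencil_rank_bound_general μ lam V R Lmat W L S C hL hS x
end

section
/- The spectral norm is submultiplicative with respect to the Hadamard product: for all A, B ∈ C^{N×N}, ‖A ∘ B‖₂ ≤ ‖A‖₂ · ‖B‖₂, where ‖·‖₂ denotes the operator norm induced by the Euclidean vector norm. -/
/-!
Schur's bound: if every column of `A` has Euclidean norm at most `a` and every row of `B` has
Euclidean norm at most `b`, then `‖A ∘ B‖₂ ≤ a b`. Indeed, Cauchy–Schwarz in row `i` gives
`|((A ∘ B) x)ᵢ|² ≤ (∑ⱼ |Bᵢⱼ|²) ∑ⱼ |Aᵢⱼ|² |xⱼ|²`, and summing over `i` and exchanging the sums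
yields `‖(A ∘ B) x‖² ≤ b² a² ‖x‖²`. The theorem follows since columns and rows of a matrix
(the images of basis vectors under the matrix and its adjoint) have norm at most its operator norm.
-/

open Matrix

/-- The spectral norm (operator norm induced by the Euclidean vector norm)
of a square complex matrix. -/
noncomputable def specNorm {N : ℕ} (A : Matrix (Fin N) (Fin N) ℂ) : ℝ :=
  ‖Matrix.toEuclideanCLM (𝕜 := ℂ) A‖

namespace Matrix

open scoped Matrix.Norms.L2Operator

variable {𝕜 m n : Type*} [RCLike 𝕜] [Fintype n]

theorem norm_sq_hadamard_mulVec_apply_le (A B : Matrix m n 𝕜) (x : n → 𝕜) (i : m) :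
    ‖((A ⊙ B) *ᵥ x) i‖ ^ 2 ≤ (∑ j, ‖B i j‖ ^ 2) * ∑ j, ‖A i j‖ ^ 2 * ‖x j‖ ^ 2 := by
  have h : ‖((A ⊙ B) *ᵥ x) i‖ ≤ ∑ j, ‖B i j‖ * (‖A i j‖ * ‖x j‖) := by
    simp only [mulVec, dotProduct, hadamard_apply]
    refine (norm_sum_le _ _).trans_eq (Finset.sum_congr rfl fun j _ => ?_)
    simp only [norm_mul]
    ring
  calc ‖((A ⊙ B) *ᵥ x) i‖ ^ 2 ≤ (∑ j, ‖B i j‖ * (‖A i j‖ * ‖x j‖)) ^ 2 := by gcongr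
    _ ≤ _ := by
      simpa only [mul_pow] using Finset.sum_mul_sq_le_sq_mul_sq Finset.univ
        (fun j => ‖B i j‖) (fun j => ‖A i j‖ * ‖x j‖)

variable [Fintype m] [DecidableEq n]

theorem sum_norm_sq_col_le_l2_opNorm_sq (A : Matrix m n 𝕜) (j : n) :
    ∑ i, ‖A i j‖ ^ 2 ≤ ‖A‖ ^ 2 := by
  have h := A.l2_opNorm_mulVec (EuclideanSpace.single j 1)
  simp only [PiLp.norm_single, norm_one, mul_one] at h
  simpa [EuclideanSpace.norm_sq_eq, mulVec_single_one] using
    pow_le_pow_left₀ (norm_nonneg _) h 2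

theorem sum_norm_sq_row_le_l2_opNorm_sq [DecidableEq m] (A : Matrix m n 𝕜) (i : m) :
    ∑ j, ‖A i j‖ ^ 2 ≤ ‖A‖ ^ 2 := by
  simpa [l2_opNorm_conjTranspose] using sum_norm_sq_col_le_l2_opNorm_sq Aᴴ i

theorem l2_opNorm_hadamard_le_of_sum_norm_sq_le {a b : ℝ} (ha : 0 ≤ a) (hb : 0 ≤ b)
    (A B : Matrix m n 𝕜) (hA : ∀ j, ∑ i, ‖A i j‖ ^ 2 ≤ a ^ 2)
    (hB : ∀ i, ∑ j, ‖B i j‖ ^ 2 ≤ b ^ 2) : ‖A ⊙ B‖ ≤ a * b := by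
  rw [l2_opNorm_def]
  refine ContinuousLinearMap.opNorm_le_bound _ (mul_nonneg ha hb) fun x => ?_
  refine le_of_sq_le_sq ?_ (by positivity)
  calc ‖WithLp.toLp 2 ((A ⊙ B) *ᵥ x.ofLp)‖ ^ 2
      = ∑ i, ‖((A ⊙ B) *ᵥ x.ofLp) i‖ ^ 2 := EuclideanSpace.norm_sq_eq _
    _ ≤ ∑ i, b ^ 2 * ∑ j, ‖A i j‖ ^ 2 * ‖x j‖ ^ 2 := by
      gcongr with i
      exact (norm_sq_hadamard_mulVec_apply_le A B _ i).trans
        (mul_le_mul_of_nonneg_right (hB i) (by positivity))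
    _ = b ^ 2 * ∑ j, (∑ i, ‖A i j‖ ^ 2) * ‖x j‖ ^ 2 := by
      rw [← Finset.mul_sum, Finset.sum_comm]
      simp only [Finset.sum_mul]
    _ ≤ b ^ 2 * ∑ j, a ^ 2 * ‖x j‖ ^ 2 := by gcongr with j; exact hA j
    _ = (a * b * ‖x‖) ^ 2 := by
      rw [← Finset.mul_sum, ← EuclideanSpace.norm_sq_eq]
      ring

theorem l2_opNorm_hadamard_le [DecidableEq m] (A B : Matrix m n 𝕜) :
    ‖A ⊙ B‖ ≤ ‖A‖ * ‖B‖ :=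
  l2_opNorm_hadamard_le_of_sum_norm_sq_le (norm_nonneg A) (norm_nonneg B) A B
    (sum_norm_sq_col_le_l2_opNorm_sq A) (sum_norm_sq_row_le_l2_opNorm_sq B)

end Matrix

/-- Submultiplicativity of the spectral norm w.r.t. the Hadamard product:
`‖A ∘ B‖₂ ≤ ‖A‖₂ ‖B‖₂`. -/
theorem specNorm_hadamard_le {N : ℕ} (A B : Matrix (Fin N) (Fin N) ℂ) :
    specNorm (Matrix.hadamard A B) ≤ specNorm A * specNorm B :=
  -- `specNorm` is definitionally the L2 operator norm (`Matrix.cstar_norm_def`)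
  l2_opNorm_hadamard_le A B
end
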